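/- Under the Case-C1 setup, every path from s_1 to d_2 contains both v_5 and v_6. -/

import Mathlib

open List

/-- `IsPath E p u w` : the nonempty list `p` of vertices is a directed path
from `u` to `w` with respect to the edge relation `E`. -/
def IsPath {V : Type*} (E : V → V → Prop) (p : List V) (u w : V) : Prop :=
  p ≠ [] ∧ p.head? = some u ∧ p.getLast? = some w ∧ p.Chain' E

/-- `Reaches E u w` (written `u ~> w`) : there is a directed path from `u` to `w`. -/
def Reaches {V : Type*} (E : V → V → Prop) (u w : V) : Prop :=
  ∃ p, IsPath E p u w

/-- A two-unicast layered network: a finite directed graph, with two sources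
`s1, s2` and two destinations `d1, d2` (all four distinct), vertices partitioned
into layers `1, ..., r` such that every edge goes from a layer to the next one,
the first layer is `{s1, s2}`, the last layer is `{d1, d2}`, and each source
reaches its corresponding destination. -/
structure TwoUnicastNetwork (V : Type*) [Fintype V] where
  E : V → V → Prop
  s1 : V
  s2 : V
  d1 : V
  d2 : V
  r : ℕ
  layer : V → ℕ
  layer_pos : ∀ v, 1 ≤ layer v
  layer_le : ∀ v, layer v ≤ r
  edge_layer : ∀ u w, E u w → layer w = layer u + 1
  s_ne : s1 ≠ s2
  d_ne : d1 ≠ d2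
  sd_ne : ∀ s d, (s = s1 ∨ s = s2) → (d = d1 ∨ d = d2) → s ≠ d
  first_layer : ∀ v, layer v = 1 ↔ v = s1 ∨ v = s2
  last_layer : ∀ v, layer v = r ↔ v = d1 ∨ v = d2
  conn1 : Reaches E s1 d1
  conn2 : Reaches E s2 d2

/-- `InterferesOn N S Ri srcOther v` : within the induced subgraph `G[S]`, the
node `v` causes interference on the path `Ri` : `v ∈ S`, `v ∉ Ri`, there is an
edge (inside `G[S]`) from `v` into a node of `Ri`, and there is a path from the
other source `srcOther` to `v` lying inside `G[S]` and disjoint from `Ri`. -/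
def InterferesOn {V : Type*} [Fintype V] (N : TwoUnicastNetwork V) (S : Set V)
    (Ri : List V) (srcOther : V) (v : V) : Prop :=
  v ∈ S ∧ v ∉ Ri ∧ (∃ w ∈ Ri, w ∈ S ∧ N.E v w) ∧
    ∃ q, IsPath N.E q srcOther v ∧ (∀ x ∈ q, x ∈ S) ∧ ∀ x ∈ q, x ∉ Ri

/-- `n_i(G[S])` : the number of nodes causing interference on `Ri` within the
induced subgraph `G[S]`, the interfering path coming from `srcOther`. -/
noncomputable def nInterf {V : Type*} [Fintype V] (N : TwoUnicastNetwork V)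
    (S : Set V) (Ri : List V) (srcOther : V) : ℕ :=
  {v | InterferesOn N S Ri srcOther v}.ncard

/-- `n_i^D` : the number of nodes of the other path `Rother` causing (direct)
interference on `Ri` in `G`. -/
noncomputable def nDirect {V : Type*} [Fintype V] (N : TwoUnicastNetwork V)
    (Ri Rother : List V) (srcOther : V) : ℕ :=
  {v | InterferesOn N Set.univ Ri srcOther v ∧ v ∈ Rother}.ncard

/-- The pair `(R1, R2)` (paths `s1 → d1` and `s2 → d2`) has manageable
interference: there is `S ⊇ R1 ∪ R2` with `n_1(G[S]) ≠ 1` and `n_2(G[S]) ≠ 1`. -/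
def Manageable {V : Type*} [Fintype V] (N : TwoUnicastNetwork V)
    (R1 R2 : List V) : Prop :=
  ∃ S : Set V, (∀ x ∈ R1, x ∈ S) ∧ (∀ x ∈ R2, x ∈ S) ∧
    nInterf N S R1 N.s2 ≠ 1 ∧ nInterf N S R2 N.s1 ≠ 1

/-- The pair `(R1, R2)` has `(s1,d1)`-manageable interference. -/
def Manageable1 {V : Type*} [Fintype V] (N : TwoUnicastNetwork V)
    (R1 R2 : List V) : Prop :=
  ∃ S : Set V, (∀ x ∈ R1, x ∈ S) ∧ (∀ x ∈ R2, x ∈ S) ∧ nInterf N S R1 N.s2 ≠ 1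

/-- The pair `(R1, R2)` has `(s2,d2)`-manageable interference. -/
def Manageable2 {V : Type*} [Fintype V] (N : TwoUnicastNetwork V)
    (R1 R2 : List V) : Prop :=
  ∃ S : Set V, (∀ x ∈ R1, x ∈ S) ∧ (∀ x ∈ R2, x ∈ S) ∧ nInterf N S R2 N.s1 ≠ 1

/-- Removal of the vertex `v` disconnects `a` from `b` :
every path from `a` to `b` contains `v`. -/
def CutVert {V : Type*} [Fintype V] (N : TwoUnicastNetwork V) (v a b : V) : Prop :=
  ∀ p, IsPath N.E p a b → v ∈ p


/-!
The successor `v6` of `v5` on `Ps1v2` lies on `Pvmv1` no later than `v2`: it is not on `P11`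
because `v5` is the last node of `P11` there, and not on `P22` because nothing interferes
directly on `P22`. So following `P22` up to `vm`, then `Pvmv1` up to `v2`, then `v2 → v0` and
`P22` again gives an `s2`–`d2` path `R2` avoiding `P11` and containing `v6`. Let
`S = P11 ∪ P22 ∪ Ps2v1 ∪ p`. In `G[S]` both `v3` and `v1` interfere on `P11`, so since
`(P11, R2)` is not manageable exactly one node interferes on `R2`. Both `v5` and the node of `p`
just before `p` first meets `R2` do, so they coincide; and since a path in a layered network
meets each layer once, `p` meets `R2` in `v6`.
-/

section Path

variable {V : Type*} {E : V → V → Prop} {l l' : List V} {a b c x y : V}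

@[simp]
lemma isPath_singleton_iff : IsPath E [x] a b ↔ x = a ∧ x = b := by
  constructor
  · rintro ⟨-, ha, hb, -⟩
    simp_all
  · rintro ⟨rfl, rfl⟩
    exact ⟨by simp, rfl, rfl, isChain_singleton _⟩

lemma isPath_cons_cons_iff {t : List V} :
    IsPath E (x :: y :: t) a b ↔ x = a ∧ E x y ∧ IsPath E (y :: t) y b := by
  simp only [IsPath, ne_eq, reduceCtorEq, not_false_eq_true, head?_cons, Option.some.injEq,
    getLast?_cons_cons, true_and]
  exact ⟨fun ⟨ha, hb, hc⟩ => ⟨ha, (isChain_cons_cons.mp hc).1, hb, (isChain_cons_cons.mp hc).2⟩,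
    fun ⟨ha, hxy, hb, hc⟩ => ⟨ha, hb, isChain_cons_cons.mpr ⟨hxy, hc⟩⟩⟩

lemma IsPath.eq_cons_tail (h : IsPath E l a b) : l = a :: l.tail := by
  obtain ⟨hne, ha, -⟩ := h
  rcases l with _ | ⟨z, t⟩
  · exact absurd rfl hne
  · simp_all

lemma IsPath.start_mem (h : IsPath E l a b) : a ∈ l := by
  rw [h.eq_cons_tail]; exact mem_cons_self

lemma IsPath.end_mem (h : IsPath E l a b) : b ∈ l :=
  mem_of_getLast? h.2.2.1

@[elab_as_elim]
lemma IsPath.induction_on {motive : List V → V → Prop} (h : IsPath E l a b)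
    (single : motive [b] b)
    (cons : ∀ a y t, E a y → IsPath E (y :: t) y b → motive (y :: t) y →
      motive (a :: y :: t) a) :
    motive l a := by
  induction l generalizing a with
  | nil => exact absurd rfl h.1
  | cons x t ih =>
    rcases t with _ | ⟨y, t⟩
    · obtain ⟨rfl, rfl⟩ := isPath_singleton_iff.mp h
      exact single
    · obtain ⟨rfl, hxy, h'⟩ := isPath_cons_cons_iff.mp h
      exact cons x y t hxy h' (ih h')

lemma IsPath.cons (h : IsPath E l y b) (hxy : E x y) : IsPath E (x :: l) x b := by
  obtain ⟨t, rfl⟩ : ∃ t, l = y :: t := ⟨_, h.eq_cons_tail⟩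
  exact isPath_cons_cons_iff.mpr ⟨rfl, hxy, h⟩

lemma IsPath.append_tail (h : IsPath E l a b) (h' : IsPath E l' b c) :
    IsPath E (l ++ l'.tail) a c := by
  refine h.induction_on (motive := fun l a => IsPath E (l ++ l'.tail) a c) ?_ ?_
  · rwa [singleton_append, ← h'.eq_cons_tail]
  · intro a y t hay _ ih
    exact ih.cons hay

lemma IsPath.mem_append_tail (h : IsPath E l a b) (h' : IsPath E l' b c) :
    x ∈ l ++ l'.tail ↔ x ∈ l ∨ x ∈ l' := by
  rw [h'.eq_cons_tail, tail_cons, mem_append, mem_cons]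
  constructor
  · exact Or.imp_right .inr
  · rintro (hx | rfl | hx)
    exacts [.inl hx, .inl h.end_mem, .inr hx]

lemma IsPath.exists_suffix (h : IsPath E l a b) (hx : x ∈ l) :
    ∃ l', IsPath E l' x b ∧ l' ⊆ l := by
  refine h.induction_on (motive := fun l a => x ∈ l → ∃ l', IsPath E l' x b ∧ l' ⊆ l) ?_ ?_ hx
  · intro hx
    rw [mem_singleton.mp hx]
    exact ⟨[b], by simp, Subset.refl _⟩
  · intro a y t hay hyt ih hx
    rcases mem_cons.mp hx with rfl | hx
    · exact ⟨_, hyt.cons hay, Subset.refl _⟩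
    · obtain ⟨l', hl', hsub⟩ := ih hx
      exact ⟨l', hl', Subset.trans hsub (subset_cons_self _ _)⟩

lemma IsPath.exists_edge_into {R : List V} (h : IsPath E l a b) (ha : a ∉ R) (hb : b ∈ R) :
    ∃ u w q, E u w ∧ w ∈ R ∧ w ∈ l ∧ IsPath E q a u ∧ q ⊆ l ∧ ∀ x ∈ q, x ∉ R := by
  refine h.induction_on (motive := fun l a => a ∉ R →
      ∃ u w q, E u w ∧ w ∈ R ∧ w ∈ l ∧ IsPath E q a u ∧ q ⊆ l ∧ ∀ x ∈ q, x ∉ R) ?_ ?_ ha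
  · exact fun hb' => absurd hb hb'
  · intro a y t hay _ ih ha
    by_cases hy : y ∈ R
    · exact ⟨a, y, [a], hay, hy, by simp, by simp, by simp, by simpa using ha⟩
    · obtain ⟨u, w, q, huw, hwR, hwl, hq, hql, hqR⟩ := ih hy
      refine ⟨u, w, a :: q, huw, hwR, mem_cons_of_mem _ hwl, hq.cons hay,
        cons_subset_cons _ hql, ?_⟩
      intro x hx
      rcases mem_cons.mp hx with rfl | hx
      · exact ha
      · exact hqR x hx

end Path

section Layered

variable {V : Type*} [Fintype V] {N : TwoUnicastNetwork V} {l : List V} {a b x y : V}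

lemma IsPath.layer_le_of_mem (h : IsPath N.E l a b) (hx : x ∈ l) :
    N.layer a ≤ N.layer x ∧ N.layer x ≤ N.layer b := by
  refine h.induction_on (motive := fun l a =>
      ∀ x ∈ l, N.layer a ≤ N.layer x ∧ N.layer x ≤ N.layer b) ?_ ?_ x hx
  · intro x hx
    rw [mem_singleton.mp hx]
    exact ⟨le_rfl, le_rfl⟩
  · intro a y t hay hyt ih x hx
    have hlay := N.edge_layer a y hay
    rcases mem_cons.mp hx with rfl | hx
    · exact ⟨le_rfl, by have := (ih y hyt.start_mem).2; omega⟩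
    · exact ⟨by have := (ih x hx).1; omega, (ih x hx).2⟩

lemma IsPath.pairwise_layer_lt (h : IsPath N.E l a b) : l.Pairwise (N.layer · < N.layer ·) :=
  have : IsTrans V (N.layer · < N.layer ·) := ⟨fun _ _ _ => lt_trans⟩
  (IsChain.imp (fun u w huw => by rw [N.edge_layer u w huw]; omega) h.2.2.2).pairwise

lemma IsPath.nodup (h : IsPath N.E l a b) : l.Nodup :=
  h.pairwise_layer_lt.imp fun hxy => ne_of_apply_ne N.layer hxy.ne

lemma IsPath.eq_of_layer_eq (h : IsPath N.E l a b) (hx : x ∈ l) (hy : y ∈ l)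
    (hxy : N.layer x = N.layer y) : x = y := by
  have : Std.Symm (N.layer · ≠ N.layer ·) := ⟨fun _ _ => Ne.symm⟩
  by_contra hne
  exact (h.pairwise_layer_lt.imp ne_of_lt).forall hx hy hne hxy

lemma IsPath.exists_prefix (h : IsPath N.E l a b) (hy : y ∈ l) :
    ∃ l', IsPath N.E l' a y ∧ l' ⊆ l ∧ ∀ x ∈ l, N.layer x ≤ N.layer y → x ∈ l' := by
  refine h.induction_on (motive := fun l a => y ∈ l →
      ∃ l', IsPath N.E l' a y ∧ l' ⊆ l ∧ ∀ x ∈ l, N.layer x ≤ N.layer y → x ∈ l') ?_ ?_ hy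
  · intro hy
    rw [mem_singleton.mp hy]
    exact ⟨[b], by simp, Subset.refl _, fun x hx _ => hx⟩
  · intro a z t haz hzt ih hy
    rcases mem_cons.mp hy with rfl | hy
    · refine ⟨[y], by simp, by simp, fun x hx hxy => ?_⟩
      rcases mem_cons.mp hx with rfl | hx
      · exact mem_singleton_self _
      · have := (hzt.layer_le_of_mem hx).1
        have := N.edge_layer y z haz
        omega
    · obtain ⟨l', hl', hsub, hmem⟩ := ih hy
      refine ⟨a :: l', hl'.cons haz, cons_subset_cons _ hsub, fun x hx hxy => ?_⟩
      rcases mem_cons.mp hx with rfl | hx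
      · exact mem_cons_self
      · exact mem_cons_of_mem _ (hmem x hx hxy)

end Layered

lemma List.IsChain.rel_of_getElem?_succ {α : Type*} {R : α → α → Prop} {l : List α} {k : ℕ}
    {a b : α} (hl : l.IsChain R) (ha : l[k]? = some a) (hb : l[k + 1]? = some b) : R a b := by
  obtain ⟨_, rfl⟩ := getElem?_eq_some_iff.mp ha
  obtain ⟨hk, rfl⟩ := getElem?_eq_some_iff.mp hb
  exact hl.getElem k hk

lemma List.Nodup.getElem?_succ_notMem {α : Type*} [DecidableEq α] {l s : List α} {k : ℕ}
    {a b : α} (hl : l.Nodup) (ha : l[k]? = some a) (hb : l[k + 1]? = some b)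
    (hlast : ∀ x ∈ l, x ∈ s → l.idxOf x ≤ l.idxOf a) : b ∉ s := by
  obtain ⟨_, rfl⟩ := getElem?_eq_some_iff.mp ha
  obtain ⟨hk, rfl⟩ := getElem?_eq_some_iff.mp hb
  intro hbs
  have := hlast _ (getElem_mem hk) hbs
  rw [hl.idxOf_getElem, hl.idxOf_getElem] at this
  omega

section Detour

variable {V : Type*} [Fintype V] {N : TwoUnicastNetwork V} {P Q : List V} {s d m e y z : V}

lemma IsPath.exists_detour (hP : IsPath N.E P s d) (hm : m ∈ P) (hQ : IsPath N.E Q m e)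
    (hy : y ∈ Q) (hz : z ∈ P) (hyz : N.E y z) :
    ∃ R, IsPath N.E R s d ∧ (∀ x ∈ R, x ∈ P ∨ x ∈ Q) ∧
      ∀ x ∈ Q, N.layer x ≤ N.layer y → x ∈ R := by
  obtain ⟨A, hA, hAP, -⟩ := hP.exists_prefix hm
  obtain ⟨B, hB, hBQ, hBy⟩ := hQ.exists_prefix hy
  obtain ⟨C, hC, hCP⟩ := hP.exists_suffix hz
  have hAB := hA.append_tail hB
  have hyC := hC.cons hyz
  refine ⟨_, hAB.append_tail hyC, fun x hx => ?_, fun x hx hxy => ?_⟩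
  · rcases (hAB.mem_append_tail hyC).mp hx with hx | hx
    · rcases (hA.mem_append_tail hB).mp hx with hx | hx
      exacts [.inl (hAP hx), .inr (hBQ hx)]
    · rcases mem_cons.mp hx with rfl | hx
      exacts [.inr hy, .inl (hCP hx)]
  · exact (hAB.mem_append_tail hyC).mpr (.inl ((hA.mem_append_tail hB).mpr (.inr (hBy x hx hxy))))

end Detour

section Interference

variable {V : Type*} [Fintype V] {N : TwoUnicastNetwork V} {S : Set V} {R R' q : List V}
  {src u v w : V}

lemma InterferesOn.of_isPath (hq : IsPath N.E q src v) (hqS : ∀ x ∈ q, x ∈ S)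
    (hqR : ∀ x ∈ q, x ∉ R) (hw : w ∈ R) (hwS : w ∈ S) (hvw : N.E v w) :
    InterferesOn N S R src v :=
  ⟨hqS v hq.end_mem, hqR v hq.end_mem, ⟨w, hw, hwS, hvw⟩, q, hq, hqS, hqR⟩

lemma InterferesOn.eq_of_nInterf_eq_one (hn : nInterf N S R src = 1)
    (hu : InterferesOn N S R src u) (hv : InterferesOn N S R src v) : u = v := by
  obtain ⟨z, hz⟩ := Set.ncard_eq_one.mp hn
  have hu' : u ∈ {x | InterferesOn N S R src x} := hu
  have hv' : v ∈ {x | InterferesOn N S R src x} := hv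
  rw [hz] at hu' hv'
  exact hu'.trans hv'.symm

lemma nInterf_ne_one_of_ne (hu : InterferesOn N S R src u) (hv : InterferesOn N S R src v)
    (huv : u ≠ v) : nInterf N S R src ≠ 1 :=
  fun hn => huv (hu.eq_of_nInterf_eq_one hn hv)

lemma InterferesOn.notMem_of_nDirect_eq_zero (hv : InterferesOn N Set.univ R src v)
    (hn : nDirect N R R' src = 0) : v ∉ R' := fun hv' => by
  have hempty := (Set.ncard_eq_zero (Set.toFinite _)).mp hn
  exact hempty.subset ⟨hv, hv'⟩

lemma nInterf_ne_one_of_mem_of_isPath {Q : List V} {d x y z : V}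
    (hR' : IsPath N.E R' src d) (hdisj : R.Disjoint R') (hx : x ∈ R') (hy : y ∈ R)
    (hxy : N.E x y) (hQ : IsPath N.E Q src v) (hQR : Q.Disjoint R) (hv : v ∉ R') (hz : z ∈ R)
    (hvz : N.E v z) (hS : ∀ x, x ∈ R ∨ x ∈ R' ∨ x ∈ Q → x ∈ S) : nInterf N S R src ≠ 1 := by
  obtain ⟨B, hB, hBR', -⟩ := hR'.exists_prefix hx
  refine nInterf_ne_one_of_ne (u := x) (v := v) ?_ ?_ fun h => hv (h ▸ hx)
  · exact .of_isPath hB (fun x hx => hS x (.inr (.inl (hBR' hx))))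
      (fun x hx h => hdisj h (hBR' hx)) hy (hS y (.inl hy)) hxy
  · exact .of_isPath hQ (fun x hx => hS x (.inr (.inr hx))) (fun x hx => hQR hx)
      hz (hS z (.inl hz)) hvz

/-- The last node of `p` before it first enters `R` is an interferer, hence `v`, and `p` enters
`R` in the layer after `v`. -/
lemma InterferesOn.mem_of_nInterf_eq_one {a b d : V} {p : List V}
    (hv : InterferesOn N S R src v) (hn : nInterf N S R src = 1) (hR : IsPath N.E R a b)
    (hw : w ∈ R) (hvw : N.E v w) (hp : IsPath N.E p src d) (hpS : ∀ x ∈ p, x ∈ S)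
    (hsrc : src ∉ R) (hd : d ∈ R) : v ∈ p ∧ w ∈ p := by
  obtain ⟨u, w', q, huw', hw'R, hw'p, hq, hqp, hqR⟩ := hp.exists_edge_into hsrc hd
  have hu : InterferesOn N S R src u :=
    .of_isPath hq (fun x hx => hpS x (hqp hx)) hqR hw'R (hpS w' hw'p) huw'
  obtain rfl := hu.eq_of_nInterf_eq_one hn hv
  obtain rfl : w' = w :=
    hR.eq_of_layer_eq hw'R hw (by rw [N.edge_layer _ _ huw', N.edge_layer _ _ hvw])
  exact ⟨hqp hq.end_mem, hw'p⟩

end Interference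

theorem statement4_general {V : Type*} [Fintype V] [DecidableEq V]
    (N : TwoUnicastNetwork V)
    (P11 P22 Ps2v1 Pvmv1 Ps1v2 : List V)
    (v0 v1 v2 v3 v4 v5 v6 vm : V)
    (hP11 : IsPath N.E P11 N.s1 N.d1)
    (hP22 : IsPath N.E P22 N.s2 N.d2)
    (hdisj : P11.Disjoint P22)
    (hNoMan : ∀ R1 R2 : List V, IsPath N.E R1 N.s1 N.d1 → IsPath N.E R2 N.s2 N.d2 →
      R1.Disjoint R2 → ¬ Manageable N R1 R2)
    (hn2D : nDirect N P22 P11 N.s1 = 0)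
    (hv3P22 : v3 ∈ P22)
    (hv4P11 : v4 ∈ P11)
    (hv3v4 : N.E v3 v4)
    (hv1P22 : v1 ∉ P22)
    (hv1int : InterferesOn N Set.univ P11 N.s2 v1)
    (hPs2v1 : IsPath N.E Ps2v1 N.s2 v1)
    (hPs2v1disj : Ps2v1.Disjoint P11)
    (hvmP22 : vm ∈ P22)
    (hPvmv1 : IsPath N.E Pvmv1 vm v1)
    (hPvmv1suffix : Pvmv1 <:+ Ps2v1)
    (hv2Pvmv1 : v2 ∈ Pvmv1)
    (hv0P22 : v0 ∈ P22)
    (hv2v0 : N.E v2 v0)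
    (hPs1v2 : IsPath N.E Ps1v2 N.s1 v2)
    (hPs1v2sub : ∀ x ∈ Ps1v2, x ∈ P11 ∨ x ∈ P22 ∨ x ∈ Pvmv1)
    (hv5P11 : v5 ∈ P11)
    (hv5last : ∀ x ∈ Ps1v2, x ∈ P11 → Ps1v2.idxOf x ≤ Ps1v2.idxOf v5)
    (hv6succ : ∃ k : ℕ, Ps1v2[k]? = some v5 ∧ Ps1v2[k+1]? = some v6) :
    ∀ p : List V, IsPath N.E p N.s1 N.d2 → v5 ∈ p ∧ v6 ∈ p := by
  intro p hp
  obtain ⟨k, hk5, hk6⟩ := hv6succ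
  have hv5v6 : N.E v5 v6 := IsChain.rel_of_getElem?_succ hPs1v2.2.2.2 hk5 hk6
  have hv6 : v6 ∈ Ps1v2 := mem_of_getElem? hk6
  obtain ⟨A, hA, hAP11, -⟩ := hP11.exists_prefix hv5P11
  have hv6Pvmv1 : v6 ∈ Pvmv1 := by
    rcases hPs1v2sub v6 hv6 with h | h | h
    · exact absurd h (hPs1v2.nodup.getElem?_succ_notMem hk5 hk6 hv5last)
    · exact absurd hv5P11 <| (InterferesOn.of_isPath hA (fun _ _ => trivial)
        (fun x hx => hdisj (hAP11 hx)) h trivial hv5v6).notMem_of_nDirect_eq_zero hn2D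
    · exact h
  obtain ⟨R2, hR2, hR2sub, hR2Pvmv1⟩ :=
    hP22.exists_detour hvmP22 hPvmv1 hv2Pvmv1 hv0P22 hv2v0
  have hR2P11 : ∀ x ∈ R2, x ∉ P11 := fun x hx h11 =>
    (hR2sub x hx).elim (hdisj h11) fun h => hPs2v1disj (hPvmv1suffix.subset h) h11
  let S : Set V := {x | x ∈ P11 ∨ x ∈ P22 ∨ x ∈ Ps2v1 ∨ x ∈ p}
  have hR2S : ∀ x ∈ R2, x ∈ S := fun x hx =>
    (hR2sub x hx).elim (fun h => .inr (.inl h)) fun h => .inr (.inr (.inl (hPvmv1suffix.subset h)))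
  obtain ⟨-, -, ⟨w, hw, -, hv1w⟩, -⟩ := hv1int
  have hn1S : nInterf N S P11 N.s2 ≠ 1 :=
    nInterf_ne_one_of_mem_of_isPath hP22 hdisj hv3P22 hv4P11 hv3v4 hPs2v1 hPs2v1disj hv1P22 hw
      hv1w fun x => Or.imp_right (Or.imp_right .inl)
  have hn2S : nInterf N S R2 N.s1 = 1 := by
    by_contra h
    exact hNoMan P11 R2 hP11 hR2 (fun x h11 h2 => hR2P11 x h2 h11) ⟨S, fun x => .inl, hR2S, hn1S, h⟩
  have hv6R2 : v6 ∈ R2 := hR2Pvmv1 v6 hv6Pvmv1 (hPs1v2.layer_le_of_mem hv6).2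
  have hv5 : InterferesOn N S R2 N.s1 v5 := .of_isPath hA (fun x hx => .inl (hAP11 hx))
    (fun x hx h => hR2P11 x h (hAP11 hx)) hv6R2 (hR2S v6 hv6R2) hv5v6
  exact hv5.mem_of_nInterf_eq_one hn2S hR2 hv6R2 hv5v6 hp (fun x hx => .inr (.inr (.inr hx)))
    (fun h => hR2P11 _ h hP11.start_mem) hR2.end_mem

theorem statement4 {V : Type*} [Fintype V] [DecidableEq V]
    (N : TwoUnicastNetwork V)
    (P11 P22 Ps2v1 Pvmv1 Ps1v2 : List V)
    (v0 v1 v2 v3 v4 v5 v6 vm : V)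
    (hP11 : IsPath N.E P11 N.s1 N.d1)
    (hP22 : IsPath N.E P22 N.s2 N.d2)
    (hdisj : P11.Disjoint P22)
    (hNoMan : ∀ R1 R2 : List V, IsPath N.E R1 N.s1 N.d1 → IsPath N.E R2 N.s2 N.d2 →
      R1.Disjoint R2 → ¬ Manageable N R1 R2)
    (hn1 : 2 ≤ nInterf N Set.univ P11 N.s2)
    (hn1D : nDirect N P11 P22 N.s2 = 1)
    (hn2 : nInterf N Set.univ P22 N.s1 = 1)
    (hn2D : nDirect N P22 P11 N.s1 = 0)
    (hv3P22 : v3 ∈ P22)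
    (hv3unique : {v | InterferesOn N Set.univ P11 N.s2 v ∧ v ∈ P22} = {v3})
    (hv4P11 : v4 ∈ P11)
    (hv3v4 : N.E v3 v4)
    (hv3v4unique : ∀ w ∈ P11, N.E v3 w → w = v4)
    (hv1P11 : v1 ∉ P11)
    (hv1P22 : v1 ∉ P22)
    (hv1int : InterferesOn N Set.univ P11 N.s2 v1)
    (hPs2v1 : IsPath N.E Ps2v1 N.s2 v1)
    (hPs2v1disj : Ps2v1.Disjoint P11)
    (hvmP22 : vm ∈ P22)
    (hvmPs2v1 : vm ∈ Ps2v1)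
    (hvmlast : ∀ x ∈ Ps2v1, x ∈ P22 → Ps2v1.idxOf x ≤ Ps2v1.idxOf vm)
    (hPvmv1 : IsPath N.E Pvmv1 vm v1)
    (hPvmv1suffix : Pvmv1 <:+ Ps2v1)
    (hv2Pvmv1 : v2 ∈ Pvmv1)
    (hv2ne : v2 ≠ vm)
    (hv2unique : {v | InterferesOn N Set.univ P22 N.s1 v} = {v2})
    (hv0P22 : v0 ∈ P22)
    (hv2v0 : N.E v2 v0)
    (hv2v0unique : ∀ w ∈ P22, N.E v2 w → w = v0)
    (hPs1v2 : IsPath N.E Ps1v2 N.s1 v2)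
    (hPs1v2sub : ∀ x ∈ Ps1v2, x ∈ P11 ∨ x ∈ P22 ∨ x ∈ Pvmv1)
    (hv5P11 : v5 ∈ P11)
    (hv5mem : v5 ∈ Ps1v2)
    (hv5last : ∀ x ∈ Ps1v2, x ∈ P11 → Ps1v2.idxOf x ≤ Ps1v2.idxOf v5)
    (hv6succ : ∃ k : ℕ, Ps1v2[k]? = some v5 ∧ Ps1v2[k+1]? = some v6) :
    ∀ p : List V, IsPath N.E p N.s1 N.d2 → v5 ∈ p ∧ v6 ∈ p :=
  statement4_general N P11 P22 Ps2v1 Pvmv1 Ps1v2 v0 v1 v2 v3 v4 v5 v6 vm hP11 hP22 hdisj hNoMan hn2D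
    hv3P22 hv4P11 hv3v4 hv1P22 hv1int hPs2v1 hPs2v1disj hvmP22 hPvmv1 hPvmv1suffix hv2Pvmv1 hv0P22
    hv2v0 hPs1v2 hPs1v2sub hv5P11 hv5last hv6succ
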